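/- Let K ⊆ ℝ² be a compact set with rectifiable boundary of finite length (finite 1-dimensional Hausdorff measure). Then for all but countably many directions θ ∈ S¹, the Radon transform r ↦ R_θχ_K(r) = λ¹(K ∩ {x : ⟨x,θ⟩ = r}) is an absolutely continuous function of r. -/

import Mathlib

open MeasureTheory

/-- The Radon transform of the characteristic function of `K` in direction `θ`. -/
noncomputable def radonTransform (d : ℕ) (K : Set (EuclideanSpace ℝ (Fin d)))
    (θ : EuclideanSpace ℝ (Fin d)) (r : ℝ) : ℝ :=
  (μH[(d : ℝ) - 1] (K ∩ {x : EuclideanSpace ℝ (Fin d) | inner ℝ x θ = r})).toReal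

/-- The standard ε-δ definition of absolute continuity of a real function. -/
def AbsolutelyContinuousFun (f : ℝ → ℝ) : Prop :=
  ∀ ε > (0:ℝ), ∃ δ > (0:ℝ), ∀ (n : ℕ) (a b : Fin n → ℝ),
    (∀ i, a i ≤ b i) →
    (∀ i j, i ≠ j → Disjoint (Set.Ioo (a i) (b i)) (Set.Ioo (a j) (b j))) →
    (∑ i, (b i - a i)) < δ → (∑ i, |f (b i) - f (a i)|) < ε

open Set
open scoped RealInnerProductSpace ENNReal NNReal

noncomputable section
abbrev E2 : Type := EuclideanSpace ℝ (Fin 2)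

lemma inner2 (x y : E2) : ⟪x, y⟫ = x 0 * y 0 + x 1 * y 1 := by
  simp [PiLp.inner_apply, Fin.sum_univ_two, RCLike.inner_apply, starRingEnd_apply, mul_comm]

def perp2 (θ : E2) : E2 := WithLp.toLp 2 ![-(θ 1), θ 0]

lemma perp2_0 (θ : E2) : perp2 θ 0 = -(θ 1) := rfl
lemma perp2_1 (θ : E2) : perp2 θ 1 = θ 0 := rfl

lemma norm_sq2 (x : E2) : ⟪x, x⟫ = x 0 ^ 2 + x 1 ^ 2 := by
  rw [inner2]; ring

lemma unit_sq {θ : E2} (hθ : ‖θ‖ = 1) : θ 0 ^ 2 + θ 1 ^ 2 = 1 := by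
  have := real_inner_self_eq_norm_sq θ
  rw [norm_sq2, hθ] at this; linarith

lemma norm_perp2 {θ : E2} (hθ : ‖θ‖ = 1) : ‖perp2 θ‖ = 1 := by
  have h1 : ⟪perp2 θ, perp2 θ⟫ = 1 := by
    rw [norm_sq2, perp2_0, perp2_1]
    have := unit_sq hθ; ring_nf; linarith
  have := real_inner_self_eq_norm_sq (perp2 θ)
  rw [h1] at this
  nlinarith [norm_nonneg (perp2 θ)]

lemma inner_perp2 (θ : E2) : ⟪θ, perp2 θ⟫ = 0 := by
  rw [inner2, perp2_0, perp2_1]; ring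

lemma decomp2 {θ : E2} (hθ : ‖θ‖ = 1) (x : E2) :
    x = ⟪x, θ⟫ • θ + ⟪x, perp2 θ⟫ • perp2 θ := by
  have hu := unit_sq hθ
  refine PiLp.ext (Fin.forall_fin_two.mpr ⟨?_, ?_⟩) <;>
      simp only [PiLp.add_apply, PiLp.smul_apply, inner2, perp2_0, perp2_1, smul_eq_mul, perp2,
        Matrix.cons_val_zero, Matrix.cons_val_one, Matrix.head_cons]
  · linear_combination (-(x 0)) * hu
  · linear_combination (-(x 1)) * hu

/-- parametrization of the line `{x | ⟪x, θ⟫ = r}`. -/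
def lineMap2 (θ : E2) (r : ℝ) (t : ℝ) : E2 := r • θ + t • perp2 θ

lemma inner_lineMap2_left {θ : E2} (hθ : ‖θ‖ = 1) (r t : ℝ) :
    ⟪lineMap2 θ r t, θ⟫ = r := by
  have h1 : ⟪θ, θ⟫ = 1 := by
    rw [real_inner_self_eq_norm_sq, hθ]; norm_num
  simp only [lineMap2, inner_add_left, real_inner_smul_left, inner2, perp2_0, perp2_1]
  linear_combination r * unit_sq hθ

lemma inner_lineMap2_perp {θ : E2} (hθ : ‖θ‖ = 1) (r t : ℝ) :
    ⟪lineMap2 θ r t, perp2 θ⟫ = t := by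
  have h1 : ⟪perp2 θ, perp2 θ⟫ = 1 := by
    rw [real_inner_self_eq_norm_sq, norm_perp2 hθ]; norm_num
  simp only [lineMap2, inner_add_left, real_inner_smul_left, inner2, perp2_0, perp2_1]
  linear_combination t * unit_sq hθ

lemma isometry_lineMap2 {θ : E2} (hθ : ‖θ‖ = 1) (r : ℝ) : Isometry (lineMap2 θ r) := by
  apply Isometry.of_dist_eq
  intro t s
  have : lineMap2 θ r t - lineMap2 θ r s = (t - s) • perp2 θ := by
    simp [lineMap2]; module
  rw [dist_eq_norm, this, norm_smul, norm_perp2 hθ, Real.dist_eq]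
  simp

lemma lipschitz_inner_right {p : E2} (hp : ‖p‖ = 1) :
    LipschitzWith 1 (fun x : E2 => ⟪x, p⟫) := by
  refine LipschitzWith.of_dist_le_mul fun x y => ?_
  rw [Real.dist_eq, ← inner_sub_left, dist_eq_norm, NNReal.coe_one, one_mul]
  calc |⟪x - y, p⟫| ≤ ‖x - y‖ * ‖p‖ := abs_real_inner_le_norm _ _
  _ = ‖x - y‖ := by rw [hp, mul_one]

/-- the section of `K` over the line in direction `θ`, level `r`. -/
def sect2 (K : Set E2) (θ : E2) (r : ℝ) : Set ℝ := {t : ℝ | lineMap2 θ r t ∈ K}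

lemma sect2_image {K : Set E2} {θ : E2} (hθ : ‖θ‖ = 1) (r : ℝ) :
    K ∩ {x : E2 | ⟪x, θ⟫ = r} = lineMap2 θ r '' sect2 K θ r := by
  ext x
  constructor
  · rintro ⟨hxK, hxr⟩
    refine ⟨⟪x, perp2 θ⟫, ?_, ?_⟩
    · show lineMap2 θ r _ ∈ K
      rw [lineMap2, ← hxr, ← decomp2 hθ x]; exact hxK
    · rw [lineMap2, ← hxr, ← decomp2 hθ x]
  · rintro ⟨t, ht, rfl⟩
    exact ⟨ht, inner_lineMap2_left hθ r t⟩

lemma sect2_measure {K : Set E2} {θ : E2} (hθ : ‖θ‖ = 1) (r : ℝ) :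
    μH[1] (K ∩ {x : E2 | ⟪x, θ⟫ = r}) = volume (sect2 K θ r) := by
  rw [sect2_image hθ r, (isometry_lineMap2 hθ r).hausdorffMeasure_image (Or.inl zero_le_one),
    MeasureTheory.hausdorffMeasure_real]

/-- crossing lemma: a continuous path from outside a closed set into it meets the frontier. -/
lemma crossing {K : Set E2} (hKc : IsClosed K) {g : ℝ → E2} (hg : Continuous g) {a b : ℝ}
    (hab : a ≤ b) (ha : g a ∉ K) (hb : g b ∈ K) :
    ∃ s ∈ Set.Icc a b, g s ∈ frontier K := by
  set Q : Set ℝ := {s ∈ Set.Icc a b | g s ∈ K} with hQ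
  have hQne : Q.Nonempty := ⟨b, ⟨hab, le_refl b⟩, hb⟩
  have hQbdd : BddBelow Q := ⟨a, fun s hs => hs.1.1⟩
  have hQclosed : IsClosed Q := (isClosed_Icc.inter (hKc.preimage hg))
  set s₀ := sInf Q with hs₀
  have hs₀Q : s₀ ∈ Q := hQclosed.csInf_mem hQne hQbdd
  have hs₀ab : s₀ ∈ Set.Icc a b := hs₀Q.1
  have has₀ : a < s₀ := by
    rcases lt_or_eq_of_le hs₀ab.1 with h | h
    · exact h
    · exact absurd (h ▸ hs₀Q.2) ha
  refine ⟨s₀, hs₀ab, ?_⟩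
  rw [frontier_eq_closure_inter_closure]
  refine ⟨subset_closure hs₀Q.2, ?_⟩
  · -- g s₀ ∈ closure Kᶜ
    have : Filter.Tendsto g (nhdsWithin s₀ (Set.Iio s₀)) (nhds (g s₀)) :=
      (hg.tendsto s₀).mono_left nhdsWithin_le_nhds
    have hne : (nhdsWithin s₀ (Set.Iio s₀)).NeBot := nhdsLT_neBot s₀
    apply mem_closure_of_tendsto this
    filter_upwards [Ioo_mem_nhdsLT_of_mem (Set.right_mem_Ioc.mpr has₀)] with s hs
    intro hsK
    have : s ∈ Q := ⟨⟨le_of_lt hs.1, le_trans (le_of_lt hs.2) hs₀ab.2⟩, hsK⟩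
    exact absurd (csInf_le hQbdd this) (not_le.mpr hs.2)

lemma crossing' {K : Set E2} (hKc : IsClosed K) {g : ℝ → E2} (hg : Continuous g) {a b : ℝ}
    (hab : a ≤ b) (ha : g a ∈ K) (hb : g b ∉ K) :
    ∃ s ∈ Set.Icc a b, g s ∈ frontier K := by
  obtain ⟨s, hs, hfs⟩ := crossing hKc (hg.comp (by continuity : Continuous fun s : ℝ => a + b - s))
    hab (by simpa using hb) (by simpa using ha)
  refine ⟨a + b - s, ⟨by linarith [hs.2], by linarith [hs.1]⟩, hfs⟩

lemma symmDiff_subset_proj {K : Set E2} (hKc : IsClosed K) {θ : E2} (hθ : ‖θ‖ = 1) {a b : ℝ}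
    (hab : a ≤ b) :
    (sect2 K θ b \ sect2 K θ a) ∪ (sect2 K θ a \ sect2 K θ b) ⊆
      (fun x : E2 => ⟪x, perp2 θ⟫) ''
        (frontier K ∩ (fun x : E2 => ⟪x, θ⟫) ⁻¹' Set.Icc a b) := by
  intro t ht
  have hgc : Continuous fun s : ℝ => lineMap2 θ s t := by
    unfold lineMap2; continuity
  have key : ∃ s ∈ Set.Icc a b, lineMap2 θ s t ∈ frontier K := by
    rcases ht with ⟨hb', ha'⟩ | ⟨ha', hb'⟩
    · exact crossing hKc hgc hab ha' hb'
    · exact crossing' hKc hgc hab ha' hb'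
  obtain ⟨s, hs, hfs⟩ := key
  refine ⟨lineMap2 θ s t, ⟨hfs, ?_⟩, inner_lineMap2_perp hθ s t⟩
  simp only [Set.mem_preimage]
  rw [inner_lineMap2_left hθ]
  exact hs

lemma vol_symmDiff_le {K : Set E2} (hKc : IsClosed K) {θ : E2} (hθ : ‖θ‖ = 1) {a b : ℝ}
    (hab : a ≤ b) :
    volume ((sect2 K θ b \ sect2 K θ a) ∪ (sect2 K θ a \ sect2 K θ b)) ≤
      μH[1] (frontier K ∩ (fun x : E2 => ⟪x, θ⟫) ⁻¹' Set.Icc a b) := by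
  set F := frontier K ∩ (fun x : E2 => ⟪x, θ⟫) ⁻¹' Set.Icc a b
  calc volume ((sect2 K θ b \ sect2 K θ a) ∪ (sect2 K θ a \ sect2 K θ b))
      ≤ volume ((fun x : E2 => ⟪x, perp2 θ⟫) '' F) :=
        measure_mono (symmDiff_subset_proj hKc hθ hab)
    _ = μH[1] ((fun x : E2 => ⟪x, perp2 θ⟫) '' F) := by
        rw [MeasureTheory.hausdorffMeasure_real]
    _ ≤ 1 ^ (1:ℝ) * μH[1] F :=
        (lipschitz_inner_right (norm_perp2 hθ)).hausdorffMeasure_image_le zero_le_one F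
    _ = μH[1] F := by simp

lemma sect2_subset_Icc {K : Set E2} {R : ℝ} (hKR : K ⊆ Metric.closedBall 0 R) {θ : E2}
    (hθ : ‖θ‖ = 1) (r : ℝ) : sect2 K θ r ⊆ Set.Icc (-R) R := by
  intro t ht
  have h1 : ‖lineMap2 θ r t‖ ≤ R := by
    have := hKR ht
    simpa [Metric.mem_closedBall, dist_eq_norm] using this
  have h2 : |t| ≤ ‖lineMap2 θ r t‖ := by
    have h3 := abs_real_inner_le_norm (lineMap2 θ r t) (perp2 θ)
    rw [inner_lineMap2_perp hθ, norm_perp2 hθ, mul_one] at h3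
    exact h3
  exact Set.mem_Icc.mpr (abs_le.mp (h2.trans h1))

lemma sect2_vol_ne_top {K : Set E2} {R : ℝ} (hKR : K ⊆ Metric.closedBall 0 R) {θ : E2}
    (hθ : ‖θ‖ = 1) (r : ℝ) : volume (sect2 K θ r) ≠ ⊤ := by
  refine ne_top_of_le_ne_top ?_ (measure_mono (sect2_subset_Icc hKR hθ r))
  simp [Real.volume_Icc]

lemma abs_sect2_sub_le {K : Set E2} (hKc : IsClosed K) {R : ℝ}
    (hKR : K ⊆ Metric.closedBall 0 R) {θ : E2} (hθ : ‖θ‖ = 1) {a b : ℝ} (hab : a ≤ b)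
    (hF : μH[1] (frontier K ∩ (fun x : E2 => ⟪x, θ⟫) ⁻¹' Set.Icc a b) ≠ ⊤) :
    |(volume (sect2 K θ b)).toReal - (volume (sect2 K θ a)).toReal| ≤
      (μH[1] (frontier K ∩ (fun x : E2 => ⟪x, θ⟫) ⁻¹' Set.Icc a b)).toReal := by
  set F := frontier K ∩ (fun x : E2 => ⟪x, θ⟫) ⁻¹' Set.Icc a b with hFdef
  have hvb := sect2_vol_ne_top hKR hθ b
  have hva := sect2_vol_ne_top hKR hθ a
  have key := vol_symmDiff_le hKc hθ hab (K := K)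
  rw [← hFdef] at key
  have h1 : volume (sect2 K θ b) ≤ μH[1] F + volume (sect2 K θ a) := by
    refine le_trans (measure_mono (Set.subset_diff_union _ (sect2 K θ a))) ?_
    refine le_trans (measure_union_le _ _) ?_
    gcongr
    exact le_trans (measure_mono Set.subset_union_left) key
  have h2 : volume (sect2 K θ a) ≤ μH[1] F + volume (sect2 K θ b) := by
    refine le_trans (measure_mono (Set.subset_diff_union _ (sect2 K θ b))) ?_
    refine le_trans (measure_union_le _ _) ?_
    gcongr
    exact le_trans (measure_mono Set.subset_union_right) key
  have t1 := ENNReal.toReal_mono (ENNReal.add_ne_top.mpr ⟨hF, hva⟩) h1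
  have t2 := ENNReal.toReal_mono (ENNReal.add_ne_top.mpr ⟨hF, hvb⟩) h2
  rw [ENNReal.toReal_add hF hva] at t1
  rw [ENNReal.toReal_add hF hvb] at t2
  rw [abs_sub_le_iff]
  constructor <;> linarith

/-- If `h` expands distances on `S` by at most factor `m` backwards, then
`volume S ≤ m * volume (h '' S)`. No measurability needed. -/
lemma vol_le_of_antilip {h : ℝ → ℝ} {S : Set ℝ} {m : ℝ≥0}
    (hm : ∀ s ∈ S, ∀ t ∈ S, dist s t ≤ m * dist (h s) (h t)) :
    volume S ≤ (m : ℝ≥0∞) * volume (h '' S) := by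
  have hinj : Set.InjOn h S := by
    intro s hs t ht hst
    have := hm s hs t ht
    rw [hst] at this
    simp only [dist_self, mul_zero] at this
    exact dist_le_zero.mp this
  set g := Function.invFunOn h S with hg
  have hleft : Set.LeftInvOn g h S := hinj.leftInvOn_invFunOn
  have himg : g '' (h '' S) = S := hleft.image_image
  have hlip : LipschitzOnWith m g (h '' S) := by
    refine LipschitzOnWith.of_dist_le_mul fun x hx y hy => ?_
    obtain ⟨s, hs, rfl⟩ := hx
    obtain ⟨t, ht, rfl⟩ := hy
    rw [hleft hs, hleft ht]
    exact hm s hs t ht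
  calc volume S = μH[1] S := by rw [MeasureTheory.hausdorffMeasure_real]
    _ = μH[1] (g '' (h '' S)) := by rw [himg]
    _ ≤ (m : ℝ≥0∞) ^ (1:ℝ) * μH[1] (h '' S) := hlip.hausdorffMeasure_image_le zero_le_one
    _ = (m : ℝ≥0∞) * volume (h '' S) := by
        rw [MeasureTheory.hausdorffMeasure_real, ENNReal.rpow_one]

/-- Lusin-type property: points where `h` has nonzero derivative and lands in a null set
form a null set. -/
lemma null_preimage_deriv {h : ℝ → ℝ} {A : Set ℝ} (hA : volume A = 0) :
    volume {t : ℝ | DifferentiableAt ℝ h t ∧ deriv h t ≠ 0 ∧ h t ∈ A} = 0 := by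
  set T := {t : ℝ | DifferentiableAt ℝ h t ∧ deriv h t ≠ 0 ∧ h t ∈ A} with hT
  set Em : ℕ → Set ℝ := fun m =>
    {t : ℝ | h t ∈ A ∧ ∀ s : ℝ, |s - t| ≤ 1/(m+1) → |s - t| ≤ (m+1) * |h s - h t|} with hEm
  have hcover : T ⊆ ⋃ m, Em m := by
    rintro t ⟨hd, hc, htA⟩
    set c := deriv h t with hcdef
    have hda := hd.hasDerivAt
    rw [hasDerivAt_iff_tendsto_slope] at hda
    have hev : ∀ᶠ s in nhdsWithin t {t}ᶜ, |c|/2 ≤ |slope h t s| := by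
      have : ∀ᶠ s in nhdsWithin t {t}ᶜ, slope h t s ∈ Metric.ball c (|c|/2) :=
        hda (Metric.ball_mem_nhds c (by positivity))
      filter_upwards [this] with s hs
      have h1 : |c| - |slope h t s| ≤ |c - slope h t s| := by
        have := abs_sub_abs_le_abs_sub c (slope h t s); linarith
      rw [Metric.mem_ball, Real.dist_eq, abs_sub_comm] at hs
      linarith
    rw [eventually_nhdsWithin_iff, Metric.eventually_nhds_iff] at hev
    obtain ⟨ε, hε, hball⟩ := hev
    obtain ⟨m, hm⟩ := exists_nat_ge (max (2/|c|) (2/ε))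
    refine Set.mem_iUnion.mpr ⟨m, htA, fun s hs => ?_⟩
    rcases eq_or_ne s t with rfl | hst
    · simp
    · have hdist : dist s t < ε := by
        rw [Real.dist_eq]
        have h2ε : 2/ε ≤ (m:ℝ) := le_trans (le_max_right _ _) hm
        have hεinv : 1/((m:ℝ)+1) < ε := by
          rw [div_lt_iff₀ (by positivity)]
          rw [div_le_iff₀ hε] at h2ε
          nlinarith
        linarith [hs]
      have hslope := hball hdist (by simpa using hst)
      have hslope_eq : slope h t s = (h s - h t) / (s - t) := slope_def_field h t s
      have hsub : s - t ≠ 0 := sub_ne_zero.mpr hst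
      have habs : |h s - h t| = |slope h t s| * |s - t| := by
        rw [hslope_eq, abs_div]
        field_simp
      have hcm : 2/|c| ≤ (m:ℝ) := le_trans (le_max_left _ _) hm
      have hcpos : 0 < |c| := abs_pos.mpr hc
      -- |s - t| ≤ (m+1) * |h s - h t|
      have h1 : |c|/2 * |s - t| ≤ |h s - h t| := by
        rw [habs]
        have := abs_nonneg (s - t)
        nlinarith
      have h2 : (2:ℝ)/|c| ≤ (m:ℝ)+1 := by linarith
      rw [div_le_iff₀ hcpos] at h2
      have := abs_nonneg (s - t)
      nlinarith [abs_nonneg (h s - h t)]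
  refine measure_mono_null hcover (measure_iUnion_null fun m => ?_)
  have hsub : Em m ⊆ ⋃ k : ℤ, Em m ∩ Set.Icc ((k:ℝ)/(m+1)) ((k+1)/(m+1)) := by
    intro t ht
    refine Set.mem_iUnion.mpr ⟨⌊t * (m+1)⌋, ht, ?_, ?_⟩
    · rw [div_le_iff₀ (by positivity)]
      exact Int.floor_le _
    · rw [le_div_iff₀ (by positivity)]
      push_cast
      linarith [Int.lt_floor_add_one (t * (m+1))]
  refine measure_mono_null hsub (measure_iUnion_null fun k => ?_)
  have hkey : ∀ s ∈ Em m ∩ Set.Icc ((k:ℝ)/(m+1)) ((k+1)/(m+1)),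
      ∀ t ∈ Em m ∩ Set.Icc ((k:ℝ)/(m+1)) ((k+1)/(m+1)),
      dist s t ≤ (((m:ℝ≥0)+1 : ℝ≥0) : ℝ) * dist (h s) (h t) := by
    rintro s ⟨hsE, hsI⟩ t ⟨htE, htI⟩
    have hlen : |s - t| ≤ 1/(m+1) := by
      rw [abs_le]
      have d1 := hsI.1; have d2 := hsI.2; have d3 := htI.1; have d4 := htI.2
      constructor
      · have : ((k:ℝ))/(m+1) - ((k:ℝ)+1)/(m+1) = -(1/(m+1)) := by field_simp; ring
        nlinarith
      · have : ((k:ℝ)+1)/(m+1) - ((k:ℝ))/(m+1) = 1/(m+1) := by field_simp; ring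
        nlinarith
    have := htE.2 s hlen
    rw [Real.dist_eq, Real.dist_eq]
    push_cast
    exact this
  have himg : h '' (Em m ∩ Set.Icc ((k:ℝ)/(m+1)) ((k+1)/(m+1))) ⊆ A := by
    rintro y ⟨t, ⟨htE, _⟩, rfl⟩
    exact htE.1
  have := vol_le_of_antilip (m := (m:ℝ≥0)+1) hkey
  rw [measure_mono_null himg hA, mul_zero] at this
  exact le_antisymm this zero_le

/-- Sard-type lemma: the image under a Lipschitz curve of the set of critical points
(derivative exists and vanishes) in `[-M, M]` is `H¹`-null. -/
lemma sard_curve {γ : ℝ → E2} {C : ℝ≥0} (hγ : LipschitzWith C γ) (M : ℕ) :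
    μH[1] (γ '' {t : ℝ | |t| ≤ (M:ℝ) ∧ DifferentiableAt ℝ γ t ∧ deriv γ t = 0}) = 0 := by
  set Z := {t : ℝ | |t| ≤ (M:ℝ) ∧ DifferentiableAt ℝ γ t ∧ deriv γ t = 0} with hZ
  have key : ∀ ε : ℝ≥0, 0 < ε → μH[1] (γ '' Z) ≤ (ε : ℝ≥0∞) * (2*M+3) := by
    intro ε hε
    set Zm : ℕ → Set ℝ := fun m =>
      {t ∈ Z | ∀ s : ℝ, |s - t| ≤ 1/(m+1) → ‖γ s - γ t‖ ≤ (ε:ℝ) * |s - t|} with hZm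
    have hmono : Monotone Zm := by
      intro m m' hmm' t ht
      refine ⟨ht.1, fun s hs => ht.2 s (le_trans hs ?_)⟩
      apply one_div_le_one_div_of_le (by positivity)
      have : (m:ℝ) ≤ m' := Nat.cast_le.mpr hmm'
      linarith
    have hcover : Z = ⋃ m, Zm m := by
      refine Set.Subset.antisymm (fun t ht => ?_) (Set.iUnion_subset fun m => Set.sep_subset _ _)
      have hda : HasDerivAt γ 0 t := ht.2.2 ▸ ht.2.1.hasDerivAt
      rw [hasDerivAt_iff_isLittleO] at hda
      have hev := (hda.def (show (0:ℝ) < ε by exact_mod_cast hε))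
      rw [Metric.eventually_nhds_iff] at hev
      obtain ⟨δ, hδ, hball⟩ := hev
      obtain ⟨m, hm⟩ := exists_nat_ge (1/δ)
      refine Set.mem_iUnion.mpr ⟨m, ht, fun s hs => ?_⟩
      have hdist : dist s t < δ := by
        rw [Real.dist_eq]
        have : 1/((m:ℝ)+1) < δ := by
          rw [div_lt_iff₀ (by positivity)]
          rw [div_le_iff₀ hδ] at hm
          nlinarith
        linarith
      have := hball hdist
      simpa [Real.norm_eq_abs, smul_eq_mul] using this
    have himg_mono : Monotone fun m => γ '' Zm m := fun m m' h => Set.image_mono (hmono h)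
    rw [hcover, Set.image_iUnion, Monotone.measure_iUnion himg_mono]
    refine iSup_le fun m => ?_
    -- cover Zm m by small intervals
    set N : ℕ := M * (m+1) with hN
    set I : ℤ → Set ℝ := fun k => Set.Icc ((k:ℝ)/(m+1)) (((k:ℝ)+1)/(m+1)) with hI
    set key_finset := Finset.Icc (-(N:ℤ) - 1) ((N:ℤ) + 1) with hkf
    have hsub : Zm m ⊆ ⋃ k ∈ key_finset, Zm m ∩ I k := by
      intro t ht
      have htM : |t| ≤ (M:ℝ) := ht.1.1
      set k := ⌊t * (m+1)⌋ with hk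
      have hk1 : (k:ℝ) ≤ t * (m+1) := Int.floor_le _
      have hk2 : t * (m+1) < (k:ℝ) + 1 := Int.lt_floor_add_one _
      have habs := abs_le.mp htM
      have hmpos : (0:ℝ) < (m:ℝ)+1 := by positivity
      have hNr : (N:ℝ) = (M:ℝ) * ((m:ℝ)+1) := by rw [hN]; push_cast; ring
      refine Set.mem_biUnion (show k ∈ key_finset from ?_) ⟨ht, ?_, ?_⟩
      · rw [hkf, Finset.mem_Icc]
        constructor
        · have h1 : ((-(N:ℤ) - 1 : ℤ) : ℝ) ≤ (k:ℝ) := by push_cast; nlinarith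
          exact_mod_cast h1
        · have h1 : (k:ℝ) ≤ (((N:ℤ) + 1 : ℤ) : ℝ) := by push_cast; nlinarith
          exact_mod_cast h1
      · rw [div_le_iff₀ hmpos]; linarith
      · rw [le_div_iff₀ hmpos]; linarith
    calc μH[1] (γ '' Zm m) ≤ μH[1] (γ '' ⋃ k ∈ key_finset, Zm m ∩ I k) :=
          measure_mono (Set.image_mono hsub)
      _ = μH[1] (⋃ k ∈ key_finset, γ '' (Zm m ∩ I k)) := by rw [Set.image_iUnion₂]
      _ ≤ ∑ k ∈ key_finset, μH[1] (γ '' (Zm m ∩ I k)) := measure_biUnion_finset_le _ _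
      _ ≤ ∑ k ∈ key_finset, (ε : ℝ≥0∞) * ENNReal.ofReal (1/(m+1)) := by
          refine Finset.sum_le_sum fun k _ => ?_
          have hlip : LipschitzOnWith ε γ (Zm m ∩ I k) := by
            refine LipschitzOnWith.of_dist_le_mul fun x hx y hy => ?_
            have hlen : |x - y| ≤ 1/(m+1) := by
              obtain ⟨-, hx1, hx2⟩ := hx
              obtain ⟨-, hy1, hy2⟩ := hy
              rw [abs_le]
              have e1 : ((k:ℝ))/(m+1) - ((k:ℝ)+1)/(m+1) = -(1/(m+1)) := by field_simp; ring
              have e2 : ((k:ℝ)+1)/(m+1) - ((k:ℝ))/(m+1) = 1/(m+1) := by field_simp; ring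
              constructor <;> nlinarith
            have := hy.1.2 x hlen
            rw [dist_eq_norm, Real.dist_eq]
            calc ‖γ x - γ y‖ ≤ (ε:ℝ) * |x - y| := this
              _ = (ε:ℝ) * |x - y| := rfl
          calc μH[1] (γ '' (Zm m ∩ I k)) ≤ (ε : ℝ≥0∞) ^ (1:ℝ) * μH[1] (Zm m ∩ I k) :=
                hlip.hausdorffMeasure_image_le zero_le_one
            _ ≤ (ε : ℝ≥0∞) * ENNReal.ofReal (1/(m+1)) := by
                rw [ENNReal.rpow_one]
                refine mul_le_mul_right ?_ _
                calc μH[1] (Zm m ∩ I k) ≤ μH[1] (I k) :=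
                      measure_mono Set.inter_subset_right
                  _ = ENNReal.ofReal (1/(m+1)) := by
                      rw [MeasureTheory.hausdorffMeasure_real, hI, Real.volume_Icc]
                      congr 1
                      field_simp; ring
      _ = (key_finset.card : ℝ≥0∞) * ((ε : ℝ≥0∞) * ENNReal.ofReal (1/(m+1))) := by
          rw [Finset.sum_const, nsmul_eq_mul]
      _ ≤ (((2*M+3)*(m+1) : ℕ) : ℝ≥0∞) * ((ε : ℝ≥0∞) * ENNReal.ofReal (1/(m+1))) := by
          gcongr
          have hcard : key_finset.card = 2*N+3 := by
            rw [hkf, Int.card_Icc]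
            omega
          have hcard2 : 2*N+3 ≤ (2*M+3)*(m+1) := by
            have : (2*M+3)*(m+1) = 2*(M*(m+1)) + (3*m+3) := by ring
            rw [this, hN]
            omega
          exact_mod_cast hcard ▸ hcard2
      _ = (ε : ℝ≥0∞) * (((2*M+3 : ℕ) : ℝ≥0∞) * (((m+1 : ℕ) : ℝ≥0∞) * ENNReal.ofReal (1/(m+1)))) := by
          push_cast
          ring
      _ ≤ (ε : ℝ≥0∞) * (((2*M+3 : ℕ) : ℝ≥0∞) * 1) := by
          gcongr
          rw [← ENNReal.ofReal_natCast (m+1), ← ENNReal.ofReal_mul (by positivity)]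
          refine ENNReal.ofReal_le_one.mpr ?_
          push_cast
          rw [mul_one_div]
          exact div_self_le_one _
      _ = (ε : ℝ≥0∞) * (2*M+3) := by
          push_cast
          rw [mul_one]
  -- conclude
  by_contra h
  have hpos : 0 < μH[1] (γ '' Z) := pos_iff_ne_zero.mpr h
  obtain ⟨r, hr0, hrμ⟩ : ∃ r : ℝ≥0, 0 < r ∧ (r:ℝ≥0∞) < μH[1] (γ '' Z) := by
    rcases ENNReal.lt_iff_exists_nnreal_btwn.mp hpos with ⟨r, hr1, hr2⟩
    exact ⟨r, by exact_mod_cast hr1, hr2⟩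
  set c : ℝ≥0 := 2*M+3 with hc
  have hc0 : (0:ℝ≥0) < c := by
    rw [hc]; positivity
  have hkey := key (r / c) (by positivity)
  have heq : (2*(M:ℝ≥0∞)+3) = ((c:ℝ≥0):ℝ≥0∞) := by
    rw [hc]
    push_cast
    ring
  rw [heq, ← ENNReal.coe_mul, div_mul_cancel₀ r hc0.ne'] at hkey
  exact absurd hkey (not_le.mpr hrμ)

/-- half-plane predicate selecting one of `±w`. -/
def halfPred (w : E2) : Prop := 0 < w 0 ∨ (w 0 = 0 ∧ 0 < w 1)

lemma neg_apply2 (w : E2) (i : Fin 2) : (-w) i = -(w i) := rfl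

lemma halfPred_or {w : E2} (hw : w ≠ 0) : halfPred w ∨ halfPred (-w) := by
  have h01 : w 0 ≠ 0 ∨ w 1 ≠ 0 := by
    by_contra hcon
    push_neg at hcon
    refine hw (PiLp.ext (Fin.forall_fin_two.mpr ⟨hcon.1, hcon.2⟩))
  unfold halfPred
  rw [neg_apply2, neg_apply2]
  rcases lt_trichotomy (w 0) 0 with h | h | h
  · right; left; linarith
  · rcases lt_trichotomy (w 1) 0 with h' | h' | h'
    · right; right; constructor <;> linarith
    · exact absurd h01 (by simp [h, h'])
    · left; right; exact ⟨h, h'⟩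
  · left; left; exact h

lemma halfPred_not_neg {w : E2} (h : halfPred w) : ¬ halfPred (-w) := by
  rintro (h' | ⟨h1', h2'⟩) <;> rcases h with h | ⟨h1, h2⟩ <;>
    rw [neg_apply2] at * <;> linarith

lemma orth_eq_or_neg {v θ θ' : E2} (hv : v ≠ 0) (hθ : ‖θ‖ = 1) (hθ' : ‖θ'‖ = 1)
    (h1 : ⟪v, θ⟫ = 0) (h2 : ⟪v, θ'⟫ = 0) : θ' = θ ∨ θ' = -θ := by
  rw [inner2] at h1 h2
  have hu := unit_sq hθ
  have hu' := unit_sq hθ'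
  have hv01 : v 0 ≠ 0 ∨ v 1 ≠ 0 := by
    by_contra hcon
    push_neg at hcon
    exact hv (PiLp.ext (Fin.forall_fin_two.mpr ⟨hcon.1, hcon.2⟩))
  have hdet : θ 0 * θ' 1 - θ 1 * θ' 0 = 0 := by
    rcases hv01 with h | h
    · have hz : v 0 * (θ 0 * θ' 1 - θ 1 * θ' 0) = 0 := by
        linear_combination θ' 1 * h1 - θ 1 * h2
      exact (mul_eq_zero.mp hz).resolve_left h
    · have hz : v 1 * (θ 0 * θ' 1 - θ 1 * θ' 0) = 0 := by
        linear_combination (-(θ' 0)) * h1 + θ 0 * h2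
      exact (mul_eq_zero.mp hz).resolve_left h
  set c := θ 0 * θ' 0 + θ 1 * θ' 1 with hc
  have hc2 : c ^ 2 = 1 := by
    rw [hc]
    linear_combination (-(θ 0 * θ' 1 - θ 1 * θ' 0)) * hdet + (θ' 0^2 + θ' 1^2) * hu + hu'
  have e0 : θ' 0 = c * θ 0 := by
    rw [hc]; linear_combination (-(θ 1)) * hdet + (-(θ' 0)) * hu
  have e1 : θ' 1 = c * θ 1 := by
    rw [hc]; linear_combination (θ 0) * hdet + (-(θ' 1)) * hu
  have : (c - 1) * (c + 1) = 0 := by linear_combination hc2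
  rcases mul_eq_zero.mp this with h | h
  · left
    refine PiLp.ext (Fin.forall_fin_two.mpr ⟨?_, ?_⟩)
    · rw [e0]; nlinarith
    · rw [e1]; nlinarith
  · right
    refine PiLp.ext (Fin.forall_fin_two.mpr ⟨?_, ?_⟩)
    · rw [neg_apply2, e0]; nlinarith
    · rw [neg_apply2, e1]; nlinarith

lemma measurable_Bset (γ : ℝ → E2) (θ : E2) :
    MeasurableSet {t : ℝ | DifferentiableAt ℝ γ t ∧ deriv γ t ≠ 0 ∧ ⟪deriv γ t, θ⟫ = 0} := by
  have h1 : MeasurableSet {t : ℝ | DifferentiableAt ℝ γ t} :=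
    measurableSet_of_differentiableAt ℝ γ
  have h2 : Measurable (deriv γ) := measurable_deriv γ
  have h3 : MeasurableSet {t : ℝ | deriv γ t ≠ 0} := h2 (measurableSet_singleton 0).compl
  have h4 : MeasurableSet {t : ℝ | ⟪deriv γ t, θ⟫ = 0} := by
    have : Measurable fun t => ⟪deriv γ t, θ⟫ :=
      ((continuous_id.inner continuous_const).measurable).comp h2
    exact this (measurableSet_singleton 0)
  exact h1.inter (h3.inter h4)

lemma countable_bad_directions (γ : ℝ → E2) (M : ℕ) :
    Set.Countable {θ : E2 | ‖θ‖ = 1 ∧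
      0 < volume ({t : ℝ | DifferentiableAt ℝ γ t ∧ deriv γ t ≠ 0 ∧ ⟪deriv γ t, θ⟫ = 0}
        ∩ Set.Icc (-(M:ℝ)) M)} := by
  set B : E2 → Set ℝ := fun θ =>
    {t : ℝ | DifferentiableAt ℝ γ t ∧ deriv γ t ≠ 0 ∧ ⟪deriv γ t, θ⟫ = 0} ∩ Set.Icc (-(M:ℝ)) M
    with hB
  set ι := {θ : E2 // ‖θ‖ = 1 ∧ halfPred θ} with hι
  have hmble : ∀ i : ι, MeasurableSet (B i.1) :=
    fun i => (measurable_Bset γ i.1).inter measurableSet_Icc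
  have hdisj : Pairwise (Function.onFun Disjoint fun i : ι => B i.1) := by
    intro i j hij
    rw [Function.onFun]
    rw [Set.disjoint_left]
    rintro t ⟨⟨hd, hnz, ho⟩, hI⟩ ⟨⟨-, -, ho'⟩, -⟩
    rcases orth_eq_or_neg hnz i.2.1 j.2.1 ho ho' with h | h
    · exact hij (Subtype.ext h.symm)
    · exact halfPred_not_neg i.2.2 (h ▸ j.2.2)
  have hfin : volume (⋃ i : ι, B i.1) ≠ ⊤ := by
    refine ne_top_of_le_ne_top ?_ (measure_mono (Set.iUnion_subset fun i => Set.inter_subset_right))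
    simp [Real.volume_Icc]
  have hcount : Set.Countable {i : ι | 0 < volume (B i.1)} :=
    MeasureTheory.Measure.countable_meas_pos_of_disjoint_of_meas_iUnion_ne_top
      volume hmble hdisj hfin
  have hsub : {θ : E2 | ‖θ‖ = 1 ∧ 0 < volume (B θ)} ⊆
      (Subtype.val '' {i : ι | 0 < volume (B i.1)}) ∪
      ((fun θ : E2 => -θ) '' (Subtype.val '' {i : ι | 0 < volume (B i.1)})) := by
    rintro θ ⟨hθ1, hθpos⟩
    have hθne : θ ≠ 0 := by
      intro h; rw [h] at hθ1; simp at hθ1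
    have hBneg : B (-θ) = B θ := by
      rw [hB]
      ext t
      simp only [Set.mem_inter_iff, Set.mem_setOf_eq, inner_neg_right, neg_eq_zero]
    rcases halfPred_or hθne with hp | hp
    · exact Set.mem_union_left _ ⟨⟨θ, hθ1, hp⟩, hθpos, rfl⟩
    · refine Set.mem_union_right _ ⟨-θ, ⟨⟨-θ, by rwa [norm_neg], hp⟩, ?_, rfl⟩, by simp⟩
      show 0 < volume (B (-θ))
      rwa [hBneg]
  exact Set.Countable.mono hsub ((hcount.image _).union ((hcount.image _).image _))

/-- The core lemma: for a good direction, the boundary measure of the preimage of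
a Lebesgue-null set of levels is zero. -/
lemma key_null {K : Set E2} {γ : ℕ → ℝ → E2} {C : ℕ → NNReal}
    (hγlip : ∀ n, LipschitzWith (C n) (γ n))
    (hnull : μH[1] (frontier K \ ⋃ n, Set.range (γ n)) = 0)
    {θ : E2} (hθ : ‖θ‖ = 1)
    (hgood : ∀ n M : ℕ, volume ({t : ℝ | DifferentiableAt ℝ (γ n) t ∧ deriv (γ n) t ≠ 0 ∧
        ⟪deriv (γ n) t, θ⟫ = 0} ∩ Set.Icc (-(M:ℝ)) M) = 0)
    {A : Set ℝ} (hA : volume A = 0) :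
    μH[1] (frontier K ∩ (fun x : E2 => ⟪x, θ⟫) ⁻¹' A) = 0 := by
  set π : E2 → ℝ := fun x => ⟪x, θ⟫ with hπ
  have hcover : frontier K ∩ π ⁻¹' A ⊆
      (frontier K \ ⋃ n, Set.range (γ n)) ∪ ⋃ n, γ n '' ((π ∘ γ n) ⁻¹' A) := by
    rintro x ⟨hxf, hxA⟩
    by_cases hx : x ∈ ⋃ n, Set.range (γ n)
    · obtain ⟨n, t, rfl⟩ := Set.mem_iUnion.mp hx
      refine Set.mem_union_right _ (Set.mem_iUnion.mpr ⟨n, t, hxA, rfl⟩)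
    · exact Set.mem_union_left _ ⟨hxf, hx⟩
  refine measure_mono_null hcover (measure_union_null hnull (measure_iUnion_null fun n => ?_))
  set g := γ n with hg
  set h : ℝ → ℝ := fun t => ⟪g t, θ⟫ with hh
  have hS : (π ∘ g) ⁻¹' A ⊆
      {t : ℝ | ¬ DifferentiableAt ℝ g t} ∪
      {t : ℝ | DifferentiableAt ℝ g t ∧ deriv g t = 0} ∪
      {t : ℝ | DifferentiableAt ℝ g t ∧ deriv g t ≠ 0 ∧ ⟪deriv g t, θ⟫ = 0} ∪
      {t : ℝ | DifferentiableAt ℝ h t ∧ deriv h t ≠ 0 ∧ h t ∈ A} := by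
    intro t ht
    by_cases h1 : DifferentiableAt ℝ g t
    · by_cases h2 : deriv g t = 0
      · exact Or.inl (Or.inl (Or.inr ⟨h1, h2⟩))
      · by_cases h3 : ⟪deriv g t, θ⟫ = 0
        · exact Or.inl (Or.inr ⟨h1, h2, h3⟩)
        · -- h is differentiable at t with nonzero derivative
          have hcomm : h = fun s => (innerSL ℝ θ) (g s) := by
            funext s
            simp only [hh, innerSL_apply_apply]
            exact real_inner_comm _ _
          have hder : HasDerivAt h ((innerSL ℝ θ) (deriv g t)) t := by
            rw [hcomm]
            exact (innerSL ℝ θ).hasFDerivAt.comp_hasDerivAt t h1.hasDerivAt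
          have hderiv_h : deriv h t = ⟪deriv g t, θ⟫ := by
            rw [hder.deriv, innerSL_apply_apply, real_inner_comm]
          exact Or.inr ⟨hder.differentiableAt, by rw [hderiv_h]; exact h3, ht⟩
    · exact Or.inl (Or.inl (Or.inl h1))
  have himg := Set.image_mono (f := g) hS
  refine measure_mono_null himg ?_
  rw [Set.image_union, Set.image_union, Set.image_union]
  refine measure_union_null (measure_union_null (measure_union_null ?_ ?_) ?_) ?_
  · -- non-differentiability points: Rademacher
    have hrad : volume {t : ℝ | ¬ DifferentiableAt ℝ g t} = 0 := by
      have := (hγlip n).ae_differentiableAt (μ := volume)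
      rwa [MeasureTheory.ae_iff] at this
    refine le_antisymm (le_trans ((hγlip n).hausdorffMeasure_image_le zero_le_one _) ?_)
      zero_le
    rw [MeasureTheory.hausdorffMeasure_real, hrad, mul_zero]
  · -- critical points: Sard
    have hZ : g '' {t : ℝ | DifferentiableAt ℝ g t ∧ deriv g t = 0} ⊆
        ⋃ M : ℕ, g '' {t : ℝ | |t| ≤ (M:ℝ) ∧ DifferentiableAt ℝ g t ∧ deriv g t = 0} := by
      rintro x ⟨t, ht, rfl⟩
      obtain ⟨M, hM⟩ := exists_nat_ge |t|
      exact Set.mem_iUnion.mpr ⟨M, t, ⟨hM, ht⟩, rfl⟩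
    exact measure_mono_null hZ (measure_iUnion_null fun M => sard_curve (hγlip n) M)
  · -- tangent perpendicular points: good direction
    have hB : volume {t : ℝ | DifferentiableAt ℝ g t ∧ deriv g t ≠ 0 ∧ ⟪deriv g t, θ⟫ = 0}
        = 0 := by
      have hBsub : {t : ℝ | DifferentiableAt ℝ g t ∧ deriv g t ≠ 0 ∧ ⟪deriv g t, θ⟫ = 0} ⊆
          ⋃ M : ℕ, {t : ℝ | DifferentiableAt ℝ g t ∧ deriv g t ≠ 0 ∧ ⟪deriv g t, θ⟫ = 0}
            ∩ Set.Icc (-(M:ℝ)) M := by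
        intro t ht
        obtain ⟨M, hM⟩ := exists_nat_ge |t|
        exact Set.mem_iUnion.mpr ⟨M, ht, abs_le.mp hM⟩
      exact measure_mono_null hBsub (measure_iUnion_null fun M => hgood n M)
    refine le_antisymm (le_trans ((hγlip n).hausdorffMeasure_image_le zero_le_one _) ?_)
      zero_le
    rw [MeasureTheory.hausdorffMeasure_real, hB, mul_zero]
  · -- Lusin-type points
    have hL := null_preimage_deriv (h := h) hA
    refine le_antisymm (le_trans ((hγlip n).hausdorffMeasure_image_le zero_le_one _) ?_)
      zero_le
    rw [MeasureTheory.hausdorffMeasure_real, hL, mul_zero]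

theorem stmt_15 (K : Set (EuclideanSpace ℝ (Fin 2))) (hK : IsCompact K)
    (hrect : ∃ (γ : ℕ → ℝ → EuclideanSpace ℝ (Fin 2)) (C : ℕ → NNReal),
      (∀ n, LipschitzWith (C n) (γ n)) ∧
      μH[1] (frontier K \ ⋃ n, Set.range (γ n)) = 0)
    (hfin : μH[1] (frontier K) < ⊤) :
    ∃ D : Set (EuclideanSpace ℝ (Fin 2)), D.Countable ∧
      ∀ θ ∈ Metric.sphere (0 : EuclideanSpace ℝ (Fin 2)) 1, θ ∉ D →
        AbsolutelyContinuousFun (fun r => radonTransform 2 K θ r) := by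
  obtain ⟨γ, C, hγlip, hnull⟩ := hrect
  -- the countable set of bad directions
  refine ⟨⋃ (n : ℕ) (M : ℕ), {θ : E2 | ‖θ‖ = 1 ∧
      0 < volume ({t : ℝ | DifferentiableAt ℝ (γ n) t ∧ deriv (γ n) t ≠ 0 ∧
        ⟪deriv (γ n) t, θ⟫ = 0} ∩ Set.Icc (-(M:ℝ)) M)}, ?_, ?_⟩
  · exact Set.countable_iUnion fun n => Set.countable_iUnion fun M =>
      countable_bad_directions (γ n) M
  intro θ hθsph hθD
  have hθ : ‖θ‖ = 1 := by
    simpa using hθsph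
  have hgood : ∀ n M : ℕ, volume ({t : ℝ | DifferentiableAt ℝ (γ n) t ∧ deriv (γ n) t ≠ 0 ∧
      ⟪deriv (γ n) t, θ⟫ = 0} ∩ Set.Icc (-(M:ℝ)) M) = 0 := by
    intro n M
    by_contra hc
    exact hθD (Set.mem_iUnion.mpr ⟨n, Set.mem_iUnion.mpr ⟨M,
      ⟨hθ, pos_iff_ne_zero.mpr hc⟩⟩⟩)
  -- set up the boundary measure
  set π : E2 → ℝ := fun x => ⟪x, θ⟫ with hπdef
  have hπm : Measurable π := (continuous_id.inner continuous_const).measurable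
  set ν : Measure ℝ := Measure.map π (μH[1].restrict (frontier K)) with hν
  have hfront : MeasurableSet (frontier K) := isClosed_frontier.measurableSet
  have hνapp : ∀ s : Set ℝ, MeasurableSet s → ν s = μH[1] (frontier K ∩ π ⁻¹' s) := by
    intro s hs
    rw [hν, Measure.map_apply hπm hs, Measure.restrict_apply (hπm hs), Set.inter_comm]
  have hνfin : IsFiniteMeasure ν := by
    constructor
    rw [hνapp Set.univ MeasurableSet.univ]
    exact lt_of_le_of_lt (measure_mono Set.inter_subset_left) hfin
  have hac : ν ≪ volume := by
    refine Measure.AbsolutelyContinuous.mk fun s hs hvs => ?_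
    rw [hνapp s hs]
    exact key_null hγlip hnull hθ hgood hvs
  -- epsilon-delta
  intro ε hε
  have htot : ∫⁻ x, ν.rnDeriv volume x ∂volume ≠ ⊤ := by
    have := Measure.lintegral_rnDeriv_lt_top ν volume
    exact this.ne
  obtain ⟨δ₁, hδ₁0, hδ₁⟩ := exists_pos_setLIntegral_lt_of_measure_lt htot
    (ε := ENNReal.ofReal ε) (by simp [hε])
  obtain ⟨δ, hδ0, hδlt⟩ : ∃ δ : ℝ, 0 < δ ∧ ENNReal.ofReal δ < δ₁ := by
    rcases eq_or_ne δ₁ ⊤ with rfl | hne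
    · exact ⟨1, one_pos, by simp⟩
    · have h0 : 0 < δ₁.toReal := ENNReal.toReal_pos hδ₁0.ne' hne
      refine ⟨δ₁.toReal / 2, by linarith, ?_⟩
      rw [ENNReal.ofReal_lt_iff_lt_toReal (by linarith) hne]
      linarith
  refine ⟨δ, hδ0, ?_⟩
  intro n a b hab hdisj hsum
  obtain ⟨R, hKR⟩ := hK.isBounded.subset_closedBall 0
  have hrt : ∀ r : ℝ, radonTransform 2 K θ r = (volume (sect2 K θ r)).toReal := by
    intro r
    unfold radonTransform
    rw [show ((2:ℕ):ℝ) - 1 = 1 by norm_num, sect2_measure hθ r]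
  haveI := hνfin
  have hptν : ∀ r : ℝ, ν {r} = 0 := fun r => hac Real.volume_singleton
  have hIccIoo : ∀ i, ν (Set.Icc (a i) (b i)) = ν (Set.Ioo (a i) (b i)) := by
    intro i
    refine le_antisymm ?_ (measure_mono Set.Ioo_subset_Icc_self)
    calc ν (Set.Icc (a i) (b i)) ≤ ν ({a i} ∪ Set.Ioo (a i) (b i) ∪ {b i}) := by
          refine measure_mono fun t ht => ?_
          rcases eq_or_lt_of_le ht.1 with h1 | h1
          · exact Or.inl (Or.inl (by simp [← h1]))
          · rcases eq_or_lt_of_le ht.2 with h2 | h2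
            · exact Or.inr (by simp [h2])
            · exact Or.inl (Or.inr ⟨h1, h2⟩)
      _ ≤ ν ({a i} ∪ Set.Ioo (a i) (b i)) + ν {b i} := measure_union_le _ _
      _ ≤ ν {a i} + ν (Set.Ioo (a i) (b i)) + ν {b i} :=
          add_le_add_left (measure_union_le _ _) _
      _ = ν (Set.Ioo (a i) (b i)) := by rw [hptν, hptν, zero_add, add_zero]
  have hdisjP : Pairwise (Function.onFun Disjoint fun i => Set.Ioo (a i) (b i)) :=
    fun i j hij => hdisj i j hij
  have hUnion : ν (⋃ i, Set.Ioo (a i) (b i)) = ∑ i, ν (Set.Ioo (a i) (b i)) := by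
    rw [measure_iUnion hdisjP fun i => measurableSet_Ioo, tsum_fintype]
  have hvolU : volume (⋃ i, Set.Ioo (a i) (b i)) < δ₁ := by
    calc volume (⋃ i, Set.Ioo (a i) (b i)) ≤ ∑' i, volume (Set.Ioo (a i) (b i)) :=
          measure_iUnion_le _
      _ = ∑ i, ENNReal.ofReal (b i - a i) := by
          rw [tsum_fintype]
          exact Finset.sum_congr rfl fun i _ => Real.volume_Ioo
      _ = ENNReal.ofReal (∑ i, (b i - a i)) :=
          (ENNReal.ofReal_sum_of_nonneg fun i _ => sub_nonneg.mpr (hab i)).symm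
      _ < ENNReal.ofReal δ := (ENNReal.ofReal_lt_ofReal_iff hδ0).mpr hsum
      _ < δ₁ := hδlt
  have hνU : ν (⋃ i, Set.Ioo (a i) (b i)) < ENNReal.ofReal ε := by
    rw [← Measure.setLIntegral_rnDeriv' hac (MeasurableSet.iUnion fun i => measurableSet_Ioo)]
    exact hδ₁ _ hvolU
  calc ∑ i, |radonTransform 2 K θ (b i) - radonTransform 2 K θ (a i)|
      ≤ ∑ i, (ν (Set.Icc (a i) (b i))).toReal := by
        refine Finset.sum_le_sum fun i _ => ?_
        rw [hrt, hrt, hνapp _ measurableSet_Icc]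
        refine abs_sect2_sub_le hK.isClosed hKR hθ (hab i) ?_
        exact ne_top_of_le_ne_top hfin.ne (measure_mono Set.inter_subset_left)
    _ = ∑ i, (ν (Set.Ioo (a i) (b i))).toReal := by
        exact Finset.sum_congr rfl fun i _ => by rw [hIccIoo]
    _ = (∑ i, ν (Set.Ioo (a i) (b i))).toReal :=
        (ENNReal.toReal_sum fun i _ => measure_ne_top ν _).symm
    _ = (ν (⋃ i, Set.Ioo (a i) (b i))).toReal := by rw [hUnion]
    _ < ε := ENNReal.toReal_lt_of_lt_ofReal hνU

end
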